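/- arXiv:2201.13136 — 2 statements merged into one kernel-verified Lean document; each statement's English description precedes it below -/
import Mathlib

section
/- Let X and Y be Hausdorff topological spaces such that the product X × Y is a normal topological space, and let M : X ⇉ Y be an upper semicontinuous correspondence with nonempty compact values whose graph gra(M) is a Gδ subset of X × Y. Then there exists a continuous function θ : X × Y → [0,1] such that gra(M) = {(x,y) ∈ X × Y : θ(x,y) = sup_{z ∈ Y} θ(x,z)}. -/
/-!
The graph of an upper semicontinuous correspondence with compact values is closed, so here it
is a closed `Gδ` set `⋂ Uₙ` in the normal space `X × Y`. Summing Urysohn functions that are `1`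
on the graph and `0` off `Uₙ` with weights `2⁻ⁿ⁻¹` gives a continuous `θ : X × Y → [0,1]` with
`θ⁻¹' {1} = gra M`. Since every `M x` is nonempty, `sup_z θ (x, z) = 1` for every `x`.
-/

open Set

/-- The graph of a correspondence `M : X ⇉ Y`. -/
def corrGraph {X Y : Type*} (M : X → Set Y) : Set (X × Y) := {p | p.2 ∈ M p.1}

theorem IsClosed.exists_continuous_preimage_one_eq_of_isGδ {X : Type*} [TopologicalSpace X]
    [NormalSpace X] {s : Set X} (hs : IsClosed s) (h's : IsGδ s) :
    ∃ f : C(X, ℝ), s = f ⁻¹' {1} ∧ ∀ x, f x ∈ Icc (0 : ℝ) 1 := by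
  obtain ⟨U, hUo, rfl⟩ := isGδ_iff_eq_iInter_nat.1 h's
  choose f hf0 hf1 hf01 using fun n => exists_continuous_zero_one_of_isClosed
    (hUo n).isClosed_compl hs (disjoint_compl_left_iff_subset.2 (iInter_subset U n))
  set w : ℕ → ℝ := fun n => 1 / 2 / 2 ^ n
  have hw : Summable w := summable_geometric_two' 1
  have hw_nonneg (n : ℕ) : 0 ≤ w n := by positivity
  have hterm_nonneg (x : X) (n : ℕ) : 0 ≤ w n * f n x := mul_nonneg (hw_nonneg n) (hf01 n x).1
  have hterm_le (x : X) (n : ℕ) : w n * f n x ≤ w n :=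
    mul_le_of_le_one_right (hw_nonneg n) (hf01 n x).2
  have hsum (x : X) : Summable fun n => w n * f n x :=
    hw.of_nonneg_of_le (hterm_nonneg x) (hterm_le x)
  let θ : C(X, ℝ) :=
    { toFun x := ∑' n, w n * f n x
      continuous_toFun := continuous_tsum (fun n => by fun_prop) hw fun n x => by
        rw [Real.norm_of_nonneg (hterm_nonneg x n)]; exact hterm_le x n }
  have hθ_le (x : X) : θ x ≤ 1 :=
    ((hsum x).tsum_le_tsum (hterm_le x) hw).trans_eq (tsum_geometric_two' 1)
  refine ⟨θ, ?_, fun x => ⟨tsum_nonneg (hterm_nonneg x), hθ_le x⟩⟩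
  ext x
  refine ⟨fun hx => ?_, fun hx => ?_⟩
  · have hterm_eq : ∀ n, w n * f n x = w n := fun n => by simp [hf1 n hx]
    simp only [mem_preimage, mem_singleton_iff, θ, ContinuousMap.coe_mk, hterm_eq]
    exact tsum_geometric_two' 1
  · refine mem_iInter.2 fun n => of_not_not fun hn => ?_
    have hlt : w n * f n x < w n := by simp [hf0 n hn, w]
    have hθ_lt : θ x < 1 :=
      ((hsum x).tsum_lt_tsum (hterm_le x) hlt hw).trans_eq (tsum_geometric_two' 1)
    exact hθ_lt.ne hx

theorem corrGraph_isClosed {X Y : Type*} [TopologicalSpace X] [TopologicalSpace Y] [T2Space Y]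
    (M : X → Set Y) (hMcomp : ∀ x, IsCompact (M x))
    (hMusc : ∀ F : Set Y, IsClosed F → IsClosed {x | (M x ∩ F).Nonempty}) :
    IsClosed (corrGraph M) := by
  refine isClosed_iff_nhds.2 fun ⟨x, y⟩ hcl => of_not_not fun hy => ?_
  obtain ⟨V, W, hV, hW, hMV, hyW, hVW⟩ :=
    SeparatedNhds.of_isCompact_isCompact (hMcomp x) isCompact_singleton
      (disjoint_singleton_right.2 hy)
  -- near `x` the values of `M` stay inside `V`, and `V` misses the neighbourhood `W` of `y`
  set C : Set X := {x' | (M x' ∩ Vᶜ).Nonempty}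
  have hxC : x ∉ C := fun ⟨z, hzM, hzV⟩ => hzV (hMV hzM)
  have hnhds : Cᶜ ×ˢ W ∈ nhds (x, y) :=
    ((hMusc _ hV.isClosed_compl).isOpen_compl.prod hW).mem_nhds ⟨hxC, hyW rfl⟩
  obtain ⟨⟨x', y'⟩, ⟨hx'C, hy'W⟩, hy'⟩ := hcl _ hnhds
  exact hVW.ne_of_mem (of_not_not fun hy'V => hx'C ⟨y', hy', hy'V⟩) hy'W rfl

theorem corrGraph_eq_setOf_eq_sSup {X Y : Type*} (M : X → Set Y) (hMne : ∀ x, (M x).Nonempty)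
    (θ : X × Y → ℝ) (hθ : ∀ p, θ p ≤ 1) (hM : corrGraph M = θ ⁻¹' {1}) :
    corrGraph M = {p | θ p = sSup (range fun z => θ (p.1, z))} := by
  have hsup (x : X) : sSup (range fun z => θ (x, z)) = 1 := by
    obtain ⟨z, hz⟩ := hMne x
    have hz1 : θ (x, z) = 1 := (hM ▸ hz : (x, z) ∈ θ ⁻¹' {1})
    exact IsGreatest.csSup_eq ⟨⟨z, hz1⟩, forall_mem_range.2 fun z => hθ (x, z)⟩
  simp only [hsup, hM]
  rfl

theorem inverse_maximum_normal_product_general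
    {X Y : Type*} [TopologicalSpace X] [TopologicalSpace Y] [T2Space Y]
    [NormalSpace (X × Y)]
    (M : X → Set Y) (hMne : ∀ x, (M x).Nonempty) (hMcomp : ∀ x, IsCompact (M x))
    (hMusc : ∀ F : Set Y, IsClosed F → IsClosed {x | (M x ∩ F).Nonempty})
    (hGδ : ∃ U : ℕ → Set (X × Y), (∀ n, IsOpen (U n)) ∧ corrGraph M = ⋂ n, U n) :
    ∃ θ : X × Y → ℝ, Continuous θ ∧ (∀ p, θ p ∈ Icc (0 : ℝ) 1) ∧
      corrGraph M = {p : X × Y | θ p = sSup (range fun z => θ (p.1, z))} := by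
  obtain ⟨U, hUo, hU⟩ := hGδ
  obtain ⟨θ, hθ, hθ01⟩ :=
    (corrGraph_isClosed M hMcomp hMusc).exists_continuous_preimage_one_eq_of_isGδ
      (hU ▸ IsGδ.iInter_of_isOpen hUo)
  exact ⟨θ, θ.continuous, hθ01, corrGraph_eq_setOf_eq_sSup M hMne θ (fun p => (hθ01 p).2) hθ⟩

/-- If `X × Y` is normal and `M : X ⇉ Y` is an upper semicontinuous correspondence with
nonempty compact values whose graph is a `Gδ` subset of `X × Y`, then there is a
continuous function `θ : X × Y → [0,1]` such that
`gra M = {(x,y) : θ (x,y) = sup_{z ∈ Y} θ (x,z)}`. -/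
theorem inverse_maximum_normal_product
    {X Y : Type*} [TopologicalSpace X] [T2Space X] [TopologicalSpace Y] [T2Space Y]
    [NormalSpace (X × Y)]
    (M : X → Set Y) (hMne : ∀ x, (M x).Nonempty) (hMcomp : ∀ x, IsCompact (M x))
    (hMusc : ∀ F : Set Y, IsClosed F → IsClosed {x | (M x ∩ F).Nonempty})
    (hGδ : ∃ U : ℕ → Set (X × Y), (∀ n, IsOpen (U n)) ∧ corrGraph M = ⋂ n, U n) :
    ∃ θ : X × Y → ℝ, Continuous θ ∧ (∀ p, θ p ∈ Icc (0 : ℝ) 1) ∧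
      corrGraph M = {p : X × Y | θ p = sSup (range fun z => θ (p.1, z))} :=
  inverse_maximum_normal_product_general M hMne hMcomp hMusc hGδ
end

section
/- Let (X, d_X) and (Y, d_Y) be metric spaces and M : X ⇉ Y a correspondence with nonempty values whose graph gra(M) is a closed subset of X × Y (equipped with the metric d((x,y),(u,v)) = d_X(x,u) + d_Y(y,v), which induces the product topology). Then there exists a continuous function θ : X × Y → [0,1] such that for every x ∈ X, M(x) = {y ∈ Y : θ(x,y) = sup_{z ∈ Y} θ(x,z)}. -/
/-! The truncated proximity `θ p = 1 - min 1 (infDist p (gra M))` to the closed graph is continuous,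
takes values in `[0, 1]`, and equals `1` exactly on the graph. Since every fibre `M x` is nonempty,
`θ (x, ·)` attains `1` for each `x`, so its supremum is `1` and its maximizers are exactly `M x`. -/

open Set

open Metric

section Proximity

variable {P : Type*} [PseudoMetricSpace P]

noncomputable def proximity (G : Set P) (p : P) : ℝ := 1 - min 1 (infDist p G)

theorem continuous_proximity (G : Set P) : Continuous (proximity G) :=
  continuous_const.sub (continuous_const.min (continuous_infDist_pt G))

theorem proximity_mem_Icc (G : Set P) (p : P) : proximity G p ∈ Icc (0 : ℝ) 1 := by
  have hmin : 0 ≤ min 1 (infDist p G) := le_min zero_le_one infDist_nonneg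
  unfold proximity
  exact ⟨by linarith [min_le_left 1 (infDist p G)], by linarith⟩

theorem proximity_le_one (G : Set P) (p : P) : proximity G p ≤ 1 :=
  (proximity_mem_Icc G p).2

theorem IsClosed.proximity_eq_one_iff {G : Set P} (hG : IsClosed G) (hne : G.Nonempty) (p : P) :
    proximity G p = 1 ↔ p ∈ G := by
  rw [hG.mem_iff_infDist_zero hne, proximity, sub_eq_self]
  exact ⟨fun h => (min_eq_iff.1 h).elim (fun h => absurd h.1 one_ne_zero) And.left,
    fun h => by rw [h, min_eq_right zero_le_one]⟩

end Proximity

/-- If `X`, `Y` are metric spaces and `M : X ⇉ Y` has nonempty values and closed graph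
(in the product, whose topology is induced by the sum metric
`d((x,y),(u,v)) = d_X(x,u) + d_Y(y,v)`), then there exists a continuous
`θ : X × Y → [0,1]` such that `M x = {y : θ (x,y) = sup_{z ∈ Y} θ (x,z)}` for all `x`. -/
theorem inverse_maximum_metric
    {X Y : Type*} [MetricSpace X] [MetricSpace Y]
    (M : X → Set Y) (hMne : ∀ x, (M x).Nonempty)
    (hclosed : IsClosed (corrGraph M)) :
    ∃ θ : X × Y → ℝ, Continuous θ ∧ (∀ p, θ p ∈ Icc (0 : ℝ) 1) ∧
      ∀ x, M x = {y : Y | θ (x, y) = sSup (range fun z => θ (x, z))} := by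
  refine ⟨proximity (corrGraph M), continuous_proximity _, proximity_mem_Icc _, fun x => ?_⟩
  obtain ⟨y₀, hy₀⟩ := hMne x
  have hone : ∀ y, proximity (corrGraph M) (x, y) = 1 ↔ y ∈ M x :=
    fun y => hclosed.proximity_eq_one_iff ⟨(x, y₀), hy₀⟩ (x, y)
  have hsup : sSup (range fun z => proximity (corrGraph M) (x, z)) = 1 :=
    IsGreatest.csSup_eq ⟨⟨y₀, (hone y₀).2 hy₀⟩, forall_mem_range.2 fun z => proximity_le_one _ _⟩
  ext y
  rw [mem_ofPred_eq, hsup, hone]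
end
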